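/- For every odd k and all graphs G, H: G → H if and only if Ω_k(G) → Ω_k(H). -/

import Mathlib

/-- A finite graph: symmetric edge relation, loops allowed. -/
structure FGraph where
  V : Type
  Adj : V → V → Prop
  symm : ∀ {u v : V}, Adj u v → Adj v u
  [fin : Finite V]

attribute [instance] FGraph.fin

/-- Existence of a graph homomorphism. -/
def FGraph.Hom (G H : FGraph) : Prop :=
  ∃ f : G.V → H.V, ∀ {u v : G.V}, G.Adj u v → H.Adj (f u) (f v)

/-- Homomorphic equivalence. -/
def FGraph.HomEquiv (G H : FGraph) : Prop := G.Hom H ∧ H.Hom G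

/-- Tensor (categorical) product of graphs. -/
def FGraph.prod (G H : FGraph) : FGraph where
  V := G.V × H.V
  Adj := fun a b => G.Adj a.1 b.1 ∧ H.Adj a.2 b.2
  symm := fun h => ⟨G.symm h.1, H.symm h.2⟩

/-- A walk of length `n` from `u` to `v`. -/
def FGraph.Walk (G : FGraph) (n : ℕ) (u v : G.V) : Prop :=
  ∃ w : ℕ → G.V, w 0 = u ∧ w n = v ∧ ∀ i < n, G.Adj (w i) (w (i+1))

/-- The `k`-th power graph `Γ_k(G)`. -/
def FGraph.pow (G : FGraph) (k : ℕ) : FGraph where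
  V := G.V
  Adj := fun u v => G.Walk k u v
  symm := by
    rintro u v ⟨w, h0, hk, hadj⟩
    refine ⟨fun i => w (k - i), by simpa using hk, by simpa using h0, fun i hi => ?_⟩
    have h1 : k - (i+1) + 1 = k - i := by omega
    have h2 := hadj (k - (i+1)) (by omega)
    rw [h1] at h2
    exact G.symm h2

/-- Raw vertices for the `k`-subdivision: original vertices plus internal path
vertices `(u,v,i)` with `uv` an edge and `0 < i < k`. -/
abbrev FGraph.SubdivRaw (G : FGraph) (k : ℕ) : Type :=
  G.V ⊕ {p : G.V × G.V × Fin (k+1) // G.Adj p.1 p.2.1 ∧ 0 < p.2.2.val ∧ p.2.2.val < k}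

/-- Identification `(u,v,i) ~ (v,u,k-i)` of internal vertices. -/
def FGraph.subdivRel (G : FGraph) (k : ℕ) : G.SubdivRaw k → G.SubdivRaw k → Prop :=
  fun a b => ∃ p q, a = Sum.inr p ∧ b = Sum.inr q ∧
    p.1.1 = q.1.2.1 ∧ p.1.2.1 = q.1.1 ∧ p.1.2.2.val + q.1.2.2.val = k

/-- Adjacency on raw subdivision vertices. -/
def FGraph.subdivAdjRaw (G : FGraph) (k : ℕ) : G.SubdivRaw k → G.SubdivRaw k → Prop := fun a b =>
  match a, b with
  | .inl u, .inl v => k = 1 ∧ G.Adj u v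
  | .inl u, .inr p => (p.1.1 = u ∧ p.1.2.2.val = 1) ∨ (p.1.2.1 = u ∧ p.1.2.2.val = k - 1)
  | .inr p, .inl u => (p.1.1 = u ∧ p.1.2.2.val = 1) ∨ (p.1.2.1 = u ∧ p.1.2.2.val = k - 1)
  | .inr p, .inr q =>
      (p.1.1 = q.1.1 ∧ p.1.2.1 = q.1.2.1 ∧
        (p.1.2.2.val + 1 = q.1.2.2.val ∨ q.1.2.2.val + 1 = p.1.2.2.val)) ∨
      (p.1.1 = q.1.2.1 ∧ p.1.2.1 = q.1.1 ∧
        (p.1.2.2.val + q.1.2.2.val = k + 1 ∨ p.1.2.2.val + q.1.2.2.val = k - 1))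

/-- The `k`-subdivision `Λ_k(G)`: every edge replaced by a path with `k` edges. -/
def FGraph.subdiv (G : FGraph) (k : ℕ) : FGraph where
  V := Quot (G.subdivRel k)
  Adj := fun x y => ∃ a b, Quot.mk _ a = x ∧ Quot.mk _ b = y ∧
    (G.subdivAdjRaw k a b ∨ G.subdivAdjRaw k b a)
  symm := fun ⟨a, b, ha, hb, h⟩ => ⟨b, a, hb, ha, h.symm⟩

/-- `A` joined to `B`: every vertex of `A` adjacent to every vertex of `B`. -/
def FGraph.Join (G : FGraph) (A B : Set G.V) : Prop := ∀ a ∈ A, ∀ b ∈ B, G.Adj a b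

/-- Vertices of `Ω_{2ℓ+1}(G)`: tuples `(A_0, …, A_ℓ)` of vertex subsets with `A_0`
a singleton and `A_{i-1}` joined to `A_i`. -/
abbrev FGraph.OmegaVert (G : FGraph) (l : ℕ) : Type :=
  {A : Fin (l+1) → Set G.V //
    (∃ v, A 0 = {v}) ∧ ∀ i : Fin l, G.Join (A i.castSucc) (A i.succ)}

/-- The graph `Ω_{2ℓ+1}(G)`, right adjoint to the `(2ℓ+1)`-st power functor. -/
def FGraph.omega (G : FGraph) (l : ℕ) : FGraph where
  V := G.OmegaVert l
  Adj := fun A B =>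
    (∀ i : Fin l, A.1 i.castSucc ⊆ B.1 i.succ ∧ B.1 i.castSucc ⊆ A.1 i.succ) ∧
    G.Join (A.1 (Fin.last l)) (B.1 (Fin.last l))
  symm := fun {A B} h =>
    ⟨fun i => ⟨(h.1 i).2, (h.1 i).1⟩, fun b hb a ha => G.symm (h.2 a ha b hb)⟩

/-- A multiplicative graph. -/
def FGraph.Multiplicative (K : FGraph) : Prop :=
  ∀ G H : FGraph, (G.prod H).Hom K → G.Hom K ∨ H.Hom K

/-- A (thin) graph functor. -/
def IsGraphFunctor (F : FGraph → FGraph) : Prop :=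
  ∀ G H : FGraph, G.Hom H → (F G).Hom (F H)

/-!
Write `k = 2l+1`. The power `Γ_k(Ω_k G)` is homomorphically equivalent to `G`. One direction is
the counit of the adjunction `Γ_k ⊣ Ω_k`: send `A` to the vertex of the singleton `A_0`. For the
other, `x ↦ η(x) = ({x}, N(x), {x}, …)`, and an edge `uv` yields an explicit walk of length `k`
from `η(u)` to `η(v)` in `Ω_k G`. Since `Γ_k` preserves homomorphisms, `Ω_k G → Ω_k H` gives
`G → Γ_k(Ω_k G) → Γ_k(Ω_k H) → H`; the converse is functoriality of `Ω_k`.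
-/

namespace FGraph

variable {G H K : FGraph}

theorem Hom.trans (hGH : G.Hom H) (hHK : H.Hom K) : G.Hom K :=
  let ⟨f, hf⟩ := hGH
  let ⟨g, hg⟩ := hHK
  ⟨g ∘ f, fun h => hg (hf h)⟩

namespace Walk

variable {n m : ℕ} {u v : G.V}

theorem symm (h : G.Walk n u v) : G.Walk n v u := (G.pow n).symm h

theorem eq_of_zero (h : G.Walk 0 u v) : u = v :=
  let ⟨_, h0, h1, _⟩ := h
  h0.symm.trans h1

theorem adj_of_one (h : G.Walk 1 u v) : G.Adj u v :=
  let ⟨_, h0, h1, hadj⟩ := h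
  h0 ▸ h1 ▸ hadj 0 one_pos

theorem exists_of_add (h : G.Walk (m + n) u v) : ∃ x, G.Walk m u x ∧ G.Walk n x v := by
  obtain ⟨w, h0, hmn, hadj⟩ := h
  exact ⟨w m, ⟨w, h0, rfl, fun i hi => hadj i (by omega)⟩,
    ⟨fun i => w (m + i), rfl, hmn, fun i hi => hadj (m + i) (by omega)⟩⟩

theorem map {f : G.V → H.V} (hf : ∀ {u v}, G.Adj u v → H.Adj (f u) (f v))
    (h : G.Walk n u v) : H.Walk n (f u) (f v) :=
  let ⟨w, h0, hn, hadj⟩ := h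
  ⟨f ∘ w, congrArg f h0, congrArg f hn, fun i hi => hf (hadj i hi)⟩

end Walk

theorem Hom.pow (h : G.Hom H) (k : ℕ) : (G.pow k).Hom (H.pow k) :=
  let ⟨f, hf⟩ := h
  ⟨f, fun {_ _} hw => Walk.map (G := G) hf hw⟩

theorem Hom.omega (h : G.Hom H) (l : ℕ) : (G.omega l).Hom (H.omega l) := by
  obtain ⟨f, hf⟩ := h
  have join_image {A B : Set G.V} (hAB : G.Join A B) : H.Join (f '' A) (f '' B) := by
    rintro _ ⟨a, ha, rfl⟩ _ ⟨b, hb, rfl⟩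
    exact hf (hAB a ha b hb)
  refine ⟨fun A => ⟨fun i => f '' A.1 i, ?_, fun i => join_image (A.2.2 i)⟩, ?_⟩
  · obtain ⟨v, hv⟩ := A.2.1
    exact ⟨f v, show f '' A.1 0 = {f v} by rw [hv, Set.image_singleton]⟩
  · intro A B hAB
    exact ⟨fun i => ⟨Set.image_mono (hAB.1 i).1, Set.image_mono (hAB.1 i).2⟩, join_image hAB.2⟩

section Counit

variable {l : ℕ} {A B : (G.omega l).V} {a b : G.V}

theorem mem_of_omega_walk {j : ℕ} (hw : (G.omega l).Walk j A B) (hj : j ≤ l)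
    (ha : a ∈ A.1 0) : a ∈ B.1 ⟨j, by omega⟩ := by
  induction j generalizing B with
  | zero => exact hw.eq_of_zero ▸ ha
  | succ j ih =>
    obtain ⟨C, hAC, hCB⟩ := hw.exists_of_add
    exact (hCB.adj_of_one.1 ⟨j, hj⟩).1 (ih hAC (by omega))

/-- `a` climbs the levels from the start of the walk and `b` from its end; they meet at level `l`
on the middle edge, where `Ω` demands a join. -/
theorem adj_of_omega_walk (hw : (G.omega l).Walk (2 * l + 1) A B)
    (ha : a ∈ A.1 0) (hb : b ∈ B.1 0) : G.Adj a b := by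
  obtain ⟨C, hAC, hCB⟩ := Walk.exists_of_add (m := l) (n := 1 + l) (by convert hw using 1; omega)
  obtain ⟨D, hCD, hDB⟩ := hCB.exists_of_add
  exact hCD.adj_of_one.2 a (mem_of_omega_walk hAC le_rfl ha) b (mem_of_omega_walk hDB.symm le_rfl hb)

theorem pow_omega_hom (l : ℕ) : ((G.omega l).pow (2 * l + 1)).Hom G := by
  choose f hf using fun A : (G.omega l).V => A.2.1
  have mem_self (A : (G.omega l).V) : f A ∈ A.1 0 := by rw [hf A]; rfl
  exact ⟨f, fun {A B} hw => adj_of_omega_walk hw (mem_self A) (mem_self B)⟩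

end Counit

section Unit

variable (l : ℕ)

def etaSet (x : G.V) (i : ℕ) : Set G.V :=
  {y | (y = x ∧ i % 2 = 0) ∨ (G.Adj x y ∧ i % 2 = 1)}

def eta (x : G.V) : (G.omega l).V :=
  ⟨fun i => etaSet x i, ⟨x, by ext y; simp [etaSet]⟩, fun i y hy z hz => by
    simp only [etaSet, Set.mem_ofPred_eq, Fin.val_castSucc, Fin.val_succ] at hy hz
    rcases hy with ⟨rfl, hi⟩ | ⟨hy, hi⟩ <;> rcases hz with ⟨rfl, hi'⟩ | ⟨hz, hi'⟩
    all_goals first | omega | exact hz | exact G.symm hy⟩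

/-- Coordinate `i` of the `j`-th vertex of a walk `η(u), …, η(v)` of length `2l+1` in `Ω(G)`:
the vertex of parity `i + j` of the alternating walk `u, v, u, …`, enlarged to `N(u)` while
`j ≤ i` and to `N(v)` once `2l+1 ≤ i + j`. -/
def bridgeSet (u v : G.V) (j i : ℕ) : Set G.V :=
  {x | (x = u ∧ (i + j) % 2 = 0 ∧ j < 2 * l + 1) ∨ (x = v ∧ (i + j) % 2 = 1 ∧ 0 < j) ∨
    (G.Adj u x ∧ (i + j) % 2 = 1 ∧ j ≤ i) ∨ (G.Adj v x ∧ (i + j) % 2 = 0 ∧ 2 * l + 1 ≤ i + j)}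

variable {l} {u v : G.V} {i j : ℕ}

theorem bridgeSet_zero (hi : i ≤ l) : bridgeSet l u v 0 i = etaSet u i := by
  ext x
  simp only [bridgeSet, etaSet, Set.mem_ofPred_eq]
  grind

theorem bridgeSet_last (hi : i ≤ l) : bridgeSet l u v (2 * l + 1) i = etaSet v i := by
  ext x
  simp only [bridgeSet, etaSet, Set.mem_ofPred_eq]
  grind

theorem bridgeSet_coord_zero (hj : j ≤ 2 * l + 1) :
    bridgeSet l u v j 0 = {if j % 2 = 0 then u else v} := by
  ext x
  simp only [bridgeSet, Set.mem_ofPred_eq, Set.mem_singleton_iff]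
  grind

theorem adj_of_mem_bridgeSet (huv : G.Adj u v) {i' j' : ℕ} {y z : G.V} (hi : i ≤ l)
    (hi' : i' ≤ l) (hs : i' + j' = i + j + 1) (hy : y ∈ bridgeSet l u v j i)
    (hz : z ∈ bridgeSet l u v j' i') : G.Adj y z := by
  simp only [bridgeSet, Set.mem_ofPred_eq] at hy hz
  grind [G.symm]

theorem bridgeSet_subset_succ_succ (huv : G.Adj u v) :
    bridgeSet l u v j i ⊆ bridgeSet l u v (j + 1) (i + 1) := by
  intro x hx
  simp only [bridgeSet, Set.mem_ofPred_eq] at hx ⊢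
  grind [G.symm]

theorem bridgeSet_succ_subset_succ (huv : G.Adj u v) :
    bridgeSet l u v (j + 1) i ⊆ bridgeSet l u v j (i + 1) := by
  intro x hx
  simp only [bridgeSet, Set.mem_ofPred_eq] at hx ⊢
  grind

variable (l)

/-- Clamped at `j = 2l+1`, so that it is defined on all of `ℕ` as `Walk` requires. -/
def bridge (huv : G.Adj u v) (j : ℕ) : (G.omega l).V :=
  ⟨fun i => bridgeSet l u v (min j (2 * l + 1)) i,
    ⟨_, bridgeSet_coord_zero (min_le_right _ _)⟩,
    fun i _ hy _ hz => adj_of_mem_bridgeSet huv i.castSucc.is_le i.succ.is_le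
      (by simp only [Fin.val_castSucc, Fin.val_succ]; omega) hy hz⟩

variable {l}

theorem bridge_zero (huv : G.Adj u v) : bridge l huv 0 = eta l u := by
  apply Subtype.ext
  funext i
  exact bridgeSet_zero i.is_le

theorem bridge_last (huv : G.Adj u v) : bridge l huv (2 * l + 1) = eta l v := by
  apply Subtype.ext
  funext i
  show bridgeSet l u v (min _ _) i = etaSet v i
  rw [min_self]
  exact bridgeSet_last i.is_le

theorem bridge_adj (huv : G.Adj u v) (hj : j < 2 * l + 1) :
    (G.omega l).Adj (bridge l huv j) (bridge l huv (j + 1)) := by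
  have hmin : min j (2 * l + 1) = j := by omega
  have hmin' : min (j + 1) (2 * l + 1) = j + 1 := by omega
  refine ⟨fun i => ⟨?_, ?_⟩, fun y hy z hz => ?_⟩
  · simpa [bridge, hmin, hmin'] using bridgeSet_subset_succ_succ (i := i) (j := j) (l := l) huv
  · simpa [bridge, hmin, hmin'] using bridgeSet_succ_subset_succ (i := i) (l := l) huv
  · exact adj_of_mem_bridgeSet huv le_rfl le_rfl (by simp [hmin, hmin']; omega) hy hz

theorem hom_pow_omega : G.Hom ((G.omega l).pow (2 * l + 1)) :=
  ⟨eta l, fun huv => ⟨bridge l huv, bridge_zero huv, bridge_last huv, fun _ hj => bridge_adj huv hj⟩⟩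

end Unit

theorem homEquiv_pow_omega (l : ℕ) : ((G.omega l).pow (2 * l + 1)).HomEquiv G :=
  ⟨pow_omega_hom l, hom_pow_omega⟩

end FGraph

/-- `G → H` iff `Ω_{2ℓ+1}(G) → Ω_{2ℓ+1}(H)`. -/
theorem hom_iff_omega_hom (l : ℕ) (G H : FGraph) :
    G.Hom H ↔ (G.omega l).Hom (H.omega l) :=
  ⟨fun h => h.omega l, fun h =>
    ((G.homEquiv_pow_omega l).2.trans (h.pow (2 * l + 1))).trans (H.homEquiv_pow_omega l).1⟩
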